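/- arXiv:1401.8022 — 7 statements merged into one kernel-verified Lean document; each statement's English description precedes it below -/
import Mathlib

section
/- The Varshamov-Tenengolz code VT_a(n), consisting of all binary vectors (x_1,...,x_n) with sum_{i=1}^n i·x_i ≡ a (mod n+1), can correct a single deletion: if two codewords of VT_a(n) yield the same vector of length n-1 after deleting one coordinate each, then the two codewords are equal. -/
/-!
If `x` and `y` become equal after deleting positions `p ≤ q`, then `x = u b m w` and
`y = u m c w` for words `u, m, w` with `|u| = p`, `|u m| = q` and bits `b, c`. The two
VT checksums then differ by `(p+1)b + wt(m) - (q+1)c`, whose absolute value is at most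
`q + 1 ≤ n`, so the difference vanishes. This forces `b = c` and every bit of `m` to equal
`b`, hence `b m = m c` and `x = y`.
-/

theorem List.exists_of_eraseIdx_eq_eraseIdx {α : Type*} {x y : List α} {p q : ℕ} (hpq : p ≤ q)
    (hp : p < x.length) (hq : q < y.length) (h : x.eraseIdx p = y.eraseIdx q) :
    ∃ (u m w : List α) (b c : α),
      x = u ++ b :: m ++ w ∧ y = u ++ (m ++ [c]) ++ w ∧ (u ++ m).length = q := by
  rw [List.eraseIdx_eq_take_drop_succ, List.eraseIdx_eq_take_drop_succ,
    ← List.take_append_drop p (y.take q), List.append_assoc] at h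
  obtain ⟨hu, hv⟩ := List.append_inj h (by simp only [List.length_take]; omega)
  refine ⟨x.take p, (y.take q).drop p, y.drop (q + 1), x[p], y[q], ?_, ?_, ?_⟩
  · rw [List.append_assoc, List.cons_append, ← hv, List.getElem_cons_drop,
      List.take_append_drop]
  · rw [hu, ← List.append_assoc, List.take_append_drop, List.append_assoc, List.singleton_append,
      List.getElem_cons_drop, List.take_append_drop]
  · rw [hu, List.take_append_drop, List.length_take]
    omega

theorem List.cons_eq_concat_of_forall_eq {α : Type*} {l : List α} {b : α}
    (h : ∀ a ∈ l, a = b) : b :: l = l ++ [b] := by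
  rw [List.eq_replicate_of_mem h, ← List.replicate_succ, List.replicate_succ']

namespace VarshamovTenengolts

def vtSum (l : List Bool) : ℕ :=
  ∑ i ∈ Finset.range l.length, (i + 1) * (if l.getD i false then 1 else 0)

theorem count_true_eq_sum (l : List Bool) :
    l.count true = ∑ i ∈ Finset.range l.length, if l.getD i false then 1 else 0 := by
  induction l with
  | nil => rfl
  | cons b l ih =>
    rw [List.length_cons, Finset.sum_range_succ', List.count_cons, ih]
    cases b <;> rfl

theorem count_true_cons (b : Bool) (l : List Bool) :
    (b :: l).count true = l.count true + b.toNat := by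
  cases b <;> simp

@[simp]
theorem vtSum_nil : vtSum [] = 0 := rfl

theorem vtSum_cons (b : Bool) (l : List Bool) :
    vtSum (b :: l) = vtSum l + l.count true + b.toNat := by
  rw [vtSum, vtSum, List.length_cons, Finset.sum_range_succ', count_true_eq_sum,
    ← Finset.sum_add_distrib]
  congr 1
  · refine Finset.sum_congr rfl fun i _ => ?_
    simp only [List.getD_cons_succ]
    split <;> ring
  · cases b <;> rfl

theorem vtSum_append (u v : List Bool) :
    vtSum (u ++ v) = vtSum u + u.length * v.count true + vtSum v := by
  induction u with
  | nil => simp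
  | cons b u ih =>
    simp only [List.cons_append, vtSum_cons, ih, List.count_append, List.length_cons]
    ring

theorem vtSum_shift (u m w : List Bool) (b c : Bool) :
    vtSum (u ++ b :: m ++ w) + ((u ++ m).length + 1) * c.toNat =
      vtSum (u ++ (m ++ [c]) ++ w) + (u.length + 1) * b.toNat + m.count true := by
  simp only [vtSum_append, vtSum_cons, vtSum_nil, List.count_append, count_true_cons,
    List.count_nil, List.length_append, List.length_cons, List.length_nil]
  ring

theorem cons_eq_concat_of_vtSum_modEq {u m w : List Bool} {b c : Bool} {N : ℕ}
    (hN : (u ++ m).length + 1 < N)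
    (h : vtSum (u ++ b :: m ++ w) ≡ vtSum (u ++ (m ++ [c]) ++ w) [MOD N]) :
    b :: m = m ++ [c] := by
  have hshift := vtSum_shift u m w b c
  have hk : m.count true ≤ m.length := List.count_le_length
  rw [List.length_append] at hN hshift
  have heq := h.eq_of_abs_lt (by
    rw [abs_sub_lt_iff]
    cases b <;> cases c <;> simp only [Bool.toNat_true, Bool.toNat_false] at hshift <;> omega)
  cases b <;> cases c <;> simp only [Bool.toNat_true, Bool.toNat_false] at hshift
  · refine List.cons_eq_concat_of_forall_eq fun a ha => ?_
    have : true ∉ m := List.count_eq_zero.1 (by omega)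
    cases a
    · rfl
    · exact absurd ha this
  · omega
  · omega
  · exact List.cons_eq_concat_of_forall_eq fun a ha => (List.count_eq_length.1 (by omega) a ha).symm

theorem eq_of_eraseIdx_eq_of_vtSum_modEq {x y : List Bool} {p q N : ℕ} (hpq : p ≤ q)
    (hp : p < x.length) (hq : q < y.length) (hN : q + 1 < N)
    (hmod : vtSum x ≡ vtSum y [MOD N]) (h : x.eraseIdx p = y.eraseIdx q) : x = y := by
  obtain ⟨u, m, w, b, c, rfl, rfl, hum⟩ := List.exists_of_eraseIdx_eq_eraseIdx hpq hp hq h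
  rw [cons_eq_concat_of_vtSum_modEq (hum ▸ hN) hmod]

end VarshamovTenengolts

/-- The Varshamov-Tenengolz code `VT_a(n)` (binary vectors of length `n` with
`∑ i·x_i ≡ a (mod n+1)`) corrects a single deletion: if two codewords yield the
same length-`(n-1)` vector after deleting one coordinate each, they are equal. -/
theorem vt_code_single_deletion_correcting (n a : ℕ) (x y : List Bool)
    (hx : x.length = n) (hy : y.length = n)
    (hxa : (∑ i ∈ Finset.range n, (i + 1) * (if x.getD i false then 1 else 0)) % (n + 1) = a)
    (hya : (∑ i ∈ Finset.range n, (i + 1) * (if y.getD i false then 1 else 0)) % (n + 1) = a)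
    (p q : ℕ) (hp : p < n) (hq : q < n)
    (h : x.eraseIdx p = y.eraseIdx q) : x = y := by
  have hmod : VarshamovTenengolts.vtSum x ≡ VarshamovTenengolts.vtSum y [MOD n + 1] := by
    rw [Nat.ModEq, VarshamovTenengolts.vtSum, VarshamovTenengolts.vtSum, hx, hy, hxa, hya]
  rcases le_total p q with hpq | hqp
  · exact VarshamovTenengolts.eq_of_eraseIdx_eq_of_vtSum_modEq hpq (hx ▸ hp) (hy ▸ hq)
      (by omega) hmod h
  · exact (VarshamovTenengolts.eq_of_eraseIdx_eq_of_vtSum_modEq hqp (hy ▸ hq) (hx ▸ hp)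
      (by omega) hmod.symm h.symm).symm
end

section
/- Deleting a single element from a partial permutation induces at most a single deletion in its inversion vector: if σ' is obtained from a sequence σ of k distinct values by deleting the entry at position j, then the inversion vector of σ' (a binary vector of length k-2) can be obtained from the inversion vector of σ (a binary vector of length k-1) by deleting a single coordinate. -/
/-!
Deleting an end entry of `σ` just drops the first or last comparison. Deleting an interior entry
`y` of `… x y z …` replaces the two comparisons `x > y`, `y > z` by the single comparison `x > z`,
which by transitivity agrees with one of them; so one of those two coordinates is deleted.
-/

/-- The inversion vector of a sequence of distinct values:
`inv(σ)_i = 1` iff `σ_i > σ_{i+1}`. -/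
def invVec (l : List ℕ) : List Bool :=
  List.zipWith (fun a b => decide (a > b)) l l.tail

theorem decide_gt_eq_or_decide_gt_eq {α : Type*} [LinearOrder α] (a b c : α) :
    decide (a > c) = decide (a > b) ∨ decide (a > c) = decide (b > c) := by
  by_cases hab : b < a <;> by_cases hbc : c < b <;> by_cases hac : c < a <;>
    simp [hab, hbc, hac] <;> order

theorem invVec_cons_cons (a b : ℕ) (t : List ℕ) :
    invVec (a :: b :: t) = decide (a > b) :: invVec (b :: t) := rfl

theorem exists_invVec_eraseIdx_eq_eraseIdx :
    ∀ (l : List ℕ) (j : ℕ), j < l.length → 2 ≤ l.length →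
      ∃ i < l.length - 1, invVec (l.eraseIdx j) = (invVec l).eraseIdx i
  | _ :: _ :: _, 0, _, _ => ⟨0, by simp, rfl⟩
  | [_, _], 1, _, _ => ⟨0, by simp, rfl⟩
  | a :: b :: c :: t, 1, _, _ => by
    rcases decide_gt_eq_or_decide_gt_eq a b c with h | h
    · exact ⟨1, by simp, by simp [invVec_cons_cons, h]⟩
    · exact ⟨0, by simp, by simp [invVec_cons_cons, h]⟩
  | a :: b :: t, j + 2, hj, _ => by
    obtain ⟨i, hi, h⟩ := exists_invVec_eraseIdx_eq_eraseIdx (b :: t) (j + 1)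
      (by simpa using hj) (by simp at hj ⊢; omega)
    refine ⟨i + 1, by simp at hi ⊢; omega, ?_⟩
    rw [List.eraseIdx_cons_succ, List.eraseIdx_cons_succ, invVec_cons_cons, invVec_cons_cons,
      List.eraseIdx_cons_succ, ← h, List.eraseIdx_cons_succ]
  | [], _, _, hl | [_], _, _, hl => by simp at hl

theorem inversion_vector_single_deletion_general (k j : ℕ) (σ : List ℕ)
    (hlen : σ.length = k) (hk : 2 ≤ k) (hj : j < k) :
    ∃ i, i < k - 1 ∧ invVec (σ.eraseIdx j) = (invVec σ).eraseIdx i := by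
  subst hlen
  exact exists_invVec_eraseIdx_eq_eraseIdx σ j hj hk

/-- Deleting a single entry from a sequence of `k` distinct values induces a single
deletion in its inversion vector: the inversion vector of the shortened sequence
is obtained from the original inversion vector by deleting one coordinate. -/
theorem inversion_vector_single_deletion (k j : ℕ) (σ : List ℕ)
    (hlen : σ.length = k) (hk : 2 ≤ k) (hnd : σ.Nodup) (hj : j < k) :
    ∃ i, i < k - 1 ∧ invVec (σ.eraseIdx j) = (invVec σ).eraseIdx i :=
  inversion_vector_single_deletion_general k j σ hlen hk hj
end

section
/- Given a sequence σ of distinct values from [n], a value b ∈ [n] not appearing in σ, and a binary vector B such that inv(σ) is obtainable from B by deleting one coordinate, there is exactly one position at which b can be inserted into σ so that the resulting sequence has inversion vector equal to B. -/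
namespace List

theorem insertIdx_length_append {α : Type*} (l r : List α) (x : α) :
    (l ++ r).insertIdx l.length x = l ++ x :: r := by
  induction l with
  | nil => simp
  | cons a l ih => simp [insertIdx_succ_cons, ih]

theorem insertIdx_eq_take_append_cons_drop {α : Type*} {l : List α} {p : ℕ}
    (hp : p ≤ l.length) (x : α) : l.insertIdx p x = l.take p ++ x :: l.drop p := by
  have h := insertIdx_length_append (l.take p) (l.drop p) x
  rwa [take_append_drop, length_take_of_le hp] at h

theorem forall_eq_of_prefix_cons {α : Type*} {w : List α} {d : α} (h : w <+: d :: w) :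
    ∀ e ∈ d :: w, e = d := by
  induction w with
  | nil => simp
  | cons a w ih =>
    obtain ⟨rfl, hw⟩ := cons_prefix_cons.mp h
    simpa using ih hw

end List

theorem Set.InjOn.image_eq_of_mapsTo_of_encard_le {α β : Type*} {f : α → β} {s : Set α}
    {t : Set β} (hinj : s.InjOn f) (hs : s.Finite) (hmaps : s.MapsTo f t)
    (hcard : t.encard ≤ s.encard) : f '' s = t :=
  (hs.image f).eq_of_subset_of_encard_le hmaps.image_subset (hinj.encard_image ▸ hcard)

@[simp] theorem invVec_nil : invVec [] = [] := rfl

@[simp] theorem invVec_singleton (x : ℕ) : invVec [x] = [] := rfl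

@[simp] theorem invVec_cons_cons_s3 (x y : ℕ) (l : List ℕ) :
    invVec (x :: y :: l) = decide (x > y) :: invVec (y :: l) := rfl

theorem length_invVec (l : List ℕ) : (invVec l).length = l.length - 1 := by
  simp [invVec]

theorem invVec_append_cons (l r : List ℕ) (x : ℕ) :
    invVec (l ++ x :: r) = invVec (l ++ [x]) ++ invVec (x :: r) := by
  induction l with
  | nil => simp
  | cons a l ih =>
    cases l with
    | nil => simp
    | cons c l => simpa using ih

theorem invVec_drop (l : List ℕ) (k : ℕ) : invVec (l.drop k) = (invVec l).drop k := by
  simp [invVec, List.drop_zipWith, List.tail_drop, List.drop_tail]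

theorem invVec_take_succ (l : List ℕ) (k : ℕ) :
    invVec (l.take (k + 1)) = (invVec l).take k := by
  induction l generalizing k with
  | nil => simp
  | cons a l ih =>
    cases k with
    | zero => simp
    | succ k =>
      cases l with
      | nil => simp
      | cons c l => simpa [List.take_succ_cons] using ih k

def singleInsertions {α : Type*} (v : List α) : Set (List α) :=
  {B | ∃ l₁ c l₂, v = l₁ ++ l₂ ∧ B = l₁ ++ c :: l₂}

theorem mem_singleInsertions_of_eraseIdx {α : Type*} {B v : List α} {i : ℕ}
    (hi : i < B.length) (hv : v = B.eraseIdx i) : B ∈ singleInsertions v :=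
  ⟨B.take i, B[i], B.drop (i + 1), by rw [hv, List.eraseIdx_eq_take_drop_succ],
    by rw [List.getElem_cons_drop, List.take_append_drop]⟩

theorem singleInsertions_cons_subset {α : Type*} (a : α) (v : List α) :
    singleInsertions (a :: v) ⊆
      {B | ∃ c, c ≠ a ∧ B = c :: a :: v} ∪ List.cons a '' singleInsertions v := by
  rintro _ ⟨l₁, c, l₂, hv, rfl⟩
  cases l₁ with
  | nil =>
    subst hv
    by_cases hc : c = a
    · exact Or.inr ⟨a :: v, ⟨[], a, v, rfl, rfl⟩, by simp [hc]⟩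
    · exact Or.inl ⟨c, hc, rfl⟩
  | cons a' l₁ =>
    obtain ⟨rfl, rfl⟩ := List.cons_eq_cons.mp hv
    exact Or.inr ⟨l₁ ++ c :: l₂, ⟨l₁, c, l₂, rfl, rfl⟩, rfl⟩

theorem encard_singleInsertions_le (v : List Bool) :
    (singleInsertions v).encard ≤ v.length + 2 := by
  induction v with
  | nil =>
    have hsub : singleInsertions ([] : List Bool) ⊆ {[true], [false]} := by
      rintro _ ⟨l₁, c, l₂, hv, rfl⟩
      obtain ⟨rfl, rfl⟩ := List.append_eq_nil_iff.mp hv.symm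
      cases c <;> simp
    calc _ ≤ ({[true], [false]} : Set (List Bool)).encard := Set.encard_le_encard hsub
      _ = _ := by rw [Set.encard_pair (by simp)]; simp
  | cons a v ih =>
    have hhead : {B | ∃ c, c ≠ a ∧ B = c :: a :: v} = {(!a) :: a :: v} := by
      ext B; cases a <;> simp
    calc _ ≤ _ := Set.encard_le_encard (singleInsertions_cons_subset a v)
      _ ≤ _ := Set.encard_union_le _ _
      _ ≤ 1 + (v.length + 2) := by
        rw [hhead, Set.encard_singleton]; gcongr; exact (Set.encard_image_le _ _).trans ih
      _ = _ := by simp; ring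

theorem isChain_of_forall_mem_invVec_eq {l : List ℕ} {d : Bool} (h : ∀ e ∈ invVec l, e = d) :
    l.IsChain (fun a b => decide (a > b) = d) := by
  induction l with
  | nil => simp
  | cons a l ih =>
    cases l with
    | nil => simp
    | cons c l =>
      simp only [invVec_cons_cons_s3, List.mem_cons, forall_eq_or_imp] at h
      exact List.IsChain.cons_cons h.1 (ih h.2)

/-- `invVec (x :: u)` is both the tail and a prefix of the descent vector of the cycle
`x :: u ++ [x]`, which is therefore constant: the cycle is strictly decreasing (impossible) or
weakly increasing (hence constant). -/
theorem mem_of_invVec_cons_eq_invVec_concat {x : ℕ} {u : List ℕ} (hu : u ≠ [])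
    (h : invVec (x :: u) = invVec (u ++ [x])) : x ∈ u := by
  obtain ⟨y, u, rfl⟩ := List.exists_cons_of_ne_nil hu
  set L := x :: (y :: u ++ [x])
  have hL : invVec L = decide (x > y) :: invVec (x :: y :: u) := by
    rw [h]; rfl
  have hprefix : invVec (x :: y :: u) <+: invVec L := by
    have : L.take ((y :: u).length + 1) = x :: y :: u := by simp [L]
    rw [← this, invVec_take_succ]
    exact List.take_prefix _ _
  rw [hL] at hprefix
  have hchain : L.IsChain (fun a b => decide (a > b) = decide (x > y)) :=
    isChain_of_forall_mem_invVec_eq (hL ▸ List.forall_eq_of_prefix_cons hprefix)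
  generalize decide (x > y) = d at hchain
  cases d
  · have hle : L.Pairwise (· ≤ ·) :=
      (hchain.imp fun a b hab => by simpa using hab).pairwise
    have hxy : x ≤ y := List.rel_of_pairwise_cons hle (by simp)
    have hyx : y ≤ x := List.rel_of_pairwise_cons hle.of_cons (by simp)
    simp [le_antisymm hxy hyx]
  · have hgt : L.Pairwise (· > ·) :=
      (hchain.imp fun a b hab => by simpa using hab).pairwise
    exact absurd (List.rel_of_pairwise_cons hgt (by simp)) (lt_irrefl x)

theorem invVec_insertIdx_ne_of_lt {σ : List ℕ} {b p q : ℕ} (hb : b ∉ σ) (hpq : p < q)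
    (hq : q ≤ σ.length) : invVec (σ.insertIdx p b) ≠ invVec (σ.insertIdx q b) := by
  intro h
  set u := (σ.drop p).take (q - p)
  have hu : u ≠ [] := by
    rw [← List.length_pos_iff]; simp [u]; omega
  have hwindow_p : ((σ.insertIdx p b).drop p).take (q - p + 1) = b :: u := by
    rw [List.insertIdx_eq_take_append_cons_drop (by omega)]
    simp [u, show p ≤ σ.length by omega]
  have hwindow_q : ((σ.insertIdx q b).drop p).take (q - p + 1) = u ++ [b] := by
    rw [List.insertIdx_eq_take_append_cons_drop hq]
    have hmin : min (q - p) (σ.length - p) = q - p := by omega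
    have hpq' : p - min q σ.length = 0 := by omega
    simp [u, List.drop_append, List.take_append, List.drop_take, hmin, hpq']
  have hrot := congrArg (fun v => (v.drop p).take (q - p)) h
  simp only [← invVec_drop, ← invVec_take_succ, hwindow_p, hwindow_q] at hrot
  have hbu : b ∈ u := mem_of_invVec_cons_eq_invVec_concat hu hrot
  exact hb (List.mem_of_mem_drop (List.mem_of_mem_take hbu))

theorem injOn_invVec_insertIdx {σ : List ℕ} {b : ℕ} (hb : b ∉ σ) :
    Set.InjOn (fun p => invVec (σ.insertIdx p b)) (Set.Iic σ.length) := by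
  intro p hp q hq h
  rcases lt_trichotomy p q with hpq | rfl | hqp
  · exact absurd h (invVec_insertIdx_ne_of_lt hb hpq hq)
  · rfl
  · exact absurd h.symm (invVec_insertIdx_ne_of_lt hb hqp hp)

theorem invVec_insertIdx_mem_singleInsertions {σ : List ℕ} {p : ℕ} (b : ℕ) (hσ : σ ≠ [])
    (hp : p ≤ σ.length) : invVec (σ.insertIdx p b) ∈ singleInsertions (invVec σ) := by
  obtain ⟨l, r, rfl, rfl⟩ : ∃ l r, σ = l ++ r ∧ p = l.length :=
    ⟨σ.take p, σ.drop p, (List.take_append_drop p σ).symm, (List.length_take_of_le hp).symm⟩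
  rw [List.insertIdx_length_append]
  rcases List.eq_nil_or_concat' l with rfl | ⟨l, x, rfl⟩
  · obtain ⟨y, r, rfl⟩ := List.exists_cons_of_ne_nil (by simpa using hσ)
    exact ⟨[], decide (b > y), invVec (y :: r), rfl, rfl⟩
  cases r with
  | nil =>
    refine ⟨invVec (l ++ [x]), decide (x > b), [], by simp, ?_⟩
    rw [List.append_assoc, List.singleton_append, invVec_append_cons, invVec_cons_cons_s3,
      invVec_singleton]
  | cons y r =>
    simp only [List.append_assoc, List.singleton_append]
    rw [invVec_append_cons, invVec_append_cons l (b :: y :: r), invVec_cons_cons_s3,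
      invVec_cons_cons_s3]
    have hdescent : decide (x > y) = decide (x > b) ∨ decide (x > y) = decide (b > y) := by
      simp only [decide_eq_decide]; omega
    rcases hdescent with h | h
    · exact ⟨invVec (l ++ [x]) ++ [decide (x > b)], decide (b > y), invVec (y :: r),
        by simp [h], by simp⟩
    · exact ⟨invVec (l ++ [x]), decide (x > b), decide (b > y) :: invVec (y :: r),
        by simp [h], rfl⟩

theorem unique_insertion_matching_inversion_vector_general (σ : List ℕ)
    (b : ℕ) (hbσ : b ∉ σ)
    (B : List Bool) (hB : B.length = σ.length)
    (hdel : ∃ i, i < B.length ∧ invVec σ = B.eraseIdx i) :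
    ∃! p, p ≤ σ.length ∧ invVec (σ.insertIdx p b) = B := by
  obtain ⟨i, hi, hv⟩ := hdel
  have hσ : σ ≠ [] := List.ne_nil_of_length_pos (by omega)
  have hinj := injOn_invVec_insertIdx hbσ
  have hcard : (singleInsertions (invVec σ)).encard ≤ (Set.Iic σ.length).encard := by
    calc _ ≤ ((invVec σ).length + 2 : ℕ∞) := encard_singleInsertions_le _
      _ = _ := by
        rw [length_invVec, ← Finset.coe_Iic, Set.encard_coe_eq_coe_finsetCard, Nat.card_Iic]
        norm_cast; omega
  have hsurj := hinj.image_eq_of_mapsTo_of_encard_le (Set.finite_Iic _)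
    (fun p hp => invVec_insertIdx_mem_singleInsertions b hσ hp) hcard
  obtain ⟨p, hp, hpB⟩ := hsurj ▸ mem_singleInsertions_of_eraseIdx hi hv
  exact ⟨p, ⟨hp, hpB⟩, fun q ⟨hq, hqB⟩ => hinj hq hp (hqB.trans hpB.symm)⟩

/-- Given a sequence `σ` of distinct values from `[n]`, a value `b ∈ [n]` not in `σ`,
and a binary vector `B` such that `inv(σ)` is obtained from `B` by deleting one
coordinate, there is exactly one position at which `b` can be inserted into `σ`
so that the resulting sequence has inversion vector `B`. -/
theorem unique_insertion_matching_inversion_vector (n : ℕ) (σ : List ℕ)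
    (hnd : σ.Nodup) (hmem : ∀ x ∈ σ, x ∈ Finset.Icc 1 n)
    (b : ℕ) (hb : b ∈ Finset.Icc 1 n) (hbσ : b ∉ σ)
    (B : List Bool) (hB : B.length = σ.length)
    (hdel : ∃ i, i < B.length ∧ invVec σ = B.eraseIdx i) :
    ∃! p, p ≤ σ.length ∧ invVec (σ.insertIdx p b) = B :=
  unique_insertion_matching_inversion_vector_general σ b hbσ B hB hdel
end

section
/- The symmetric group S_n is partitioned into n classes by the VT-syndrome of the inversion vector: for each a ∈ {0,...,n-1}, the set C_a = { σ ∈ S_n : sum_{i=1}^{n-1} i·inv(σ)_i ≡ a (mod n) } has cardinality (n-1)!. -/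
/-!
Relabel values by the cyclic shift `v ↦ v % n + 1` (so `n ↦ 1` and `v ↦ v + 1` otherwise).
On a permutation of `1, …, n` this changes the descent set only next to the position `k`
(counted from `0`) of `n`: the descent at `k` (weight `k + 1`, or no descent when `k = n - 1`)
disappears and a descent at `k - 1` (weight `k`) appears. Hence the VT-syndrome drops by exactly
`1` modulo `n`, so the shift injects each class `C_b` into `C_{b-1}`. Going once around `ZMod n`
forces all `n` classes to have the same size `n! / n = (n - 1)!`.
-/

/-- The VT-syndrome of the inversion vector of a word `σ`:
`∑_{i=1}^{len-1} i · [σ_i > σ_{i+1}]`. -/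
def vtSyndrome (σ : List ℕ) : ℕ :=
  ∑ i ∈ Finset.range (σ.length - 1), (i + 1) * (if σ.getD (i + 1) 0 < σ.getD i 0 then 1 else 0)

open Finset

theorem List.map_injOn {α β : Type*} {f : α → β} {s : Set α} (hf : Set.InjOn f s) :
    Set.InjOn (List.map f) {l | ∀ x ∈ l, x ∈ s} := by
  intro l₁ h₁ l₂ h₂ h
  induction l₁ generalizing l₂ with
  | nil => exact (List.map_eq_nil_iff.mp h.symm).symm
  | cons a l ih =>
    obtain _ | ⟨b, l'⟩ := l₂
    · simp at h
    · simp only [Set.mem_ofPred_eq, List.mem_cons, forall_eq_or_imp, List.map_cons,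
        List.cons.injEq] at h₁ h₂ h
      exact congrArg₂ _ (hf h₁.1 h₂.1 h.1) (ih h₁.2 h₂.2 h.2)

theorem List.card_toFinset_permutations {α : Type*} [DecidableEq α] {l : List α} (hl : l.Nodup) :
    #l.permutations.toFinset = l.length.factorial := by
  rw [List.toFinset_card_of_nodup (List.nodup_permutations _ hl), List.length_permutations]

section ShiftedFibres

variable {α : Type*} {n : ℕ} {s : Finset α} {φ : α → ZMod n} {e : α → α}

theorem Finset.card_fiber_le_card_fiber_sub_one (hmaps : Set.MapsTo e s s) (hinj : Set.InjOn e s)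
    (hφ : ∀ x ∈ s, φ (e x) = φ x - 1) (b : ZMod n) :
    #{x ∈ s | φ x = b} ≤ #{x ∈ s | φ x = b - 1} := by
  refine card_le_card_of_injOn e (fun x hx => ?_) (hinj.mono fun x hx => (mem_filter.mp hx).1)
  simp only [coe_filter, Set.mem_ofPred_eq] at hx ⊢
  exact ⟨hmaps hx.1, by rw [hφ x hx.1, hx.2]⟩

theorem Finset.card_fiber_eq_of_sub_one [NeZero n] (hmaps : Set.MapsTo e s s)
    (hinj : Set.InjOn e s) (hφ : ∀ x ∈ s, φ (e x) = φ x - 1) (a b : ZMod n) :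
    #{x ∈ s | φ x = a} = #{x ∈ s | φ x = b} := by
  have hle (a : ZMod n) (k : ℕ) : #{x ∈ s | φ x = a} ≤ #{x ∈ s | φ x = a - k} := by
    induction k with
    | zero => simp
    | succ k ih =>
      refine ih.trans ((card_fiber_le_card_fiber_sub_one hmaps hinj hφ _).trans_eq ?_)
      push_cast
      ring_nf
  have hle' (a b : ZMod n) : #{x ∈ s | φ x = a} ≤ #{x ∈ s | φ x = b} := by
    simpa [ZMod.natCast_zmod_val] using hle a (a - b).val
  exact (hle' a b).antisymm (hle' b a)

theorem Finset.mul_card_fiber_eq_card [NeZero n] (hmaps : Set.MapsTo e s s)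
    (hinj : Set.InjOn e s) (hφ : ∀ x ∈ s, φ (e x) = φ x - 1) (a : ZMod n) :
    n * #{x ∈ s | φ x = a} = #s := by
  rw [card_eq_sum_card_fiberwise (f := φ) (s := s) (t := univ) (fun _ _ => mem_univ _),
    sum_congr rfl fun b _ => card_fiber_eq_of_sub_one hmaps hinj hφ b a, sum_const, card_univ,
    ZMod.card, smul_eq_mul]

end ShiftedFibres

def cyclicSucc (n v : ℕ) : ℕ := v % n + 1

theorem cyclicSucc_of_lt {n v : ℕ} (h : v < n) : cyclicSucc n v = v + 1 := by
  rw [cyclicSucc, Nat.mod_eq_of_lt h]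

theorem cyclicSucc_self (n : ℕ) : cyclicSucc n n = 1 := by
  simp [cyclicSucc]

theorem cyclicSucc_injOn (n : ℕ) : Set.InjOn (cyclicSucc n) (Set.Icc 1 n) := by
  intro v hv w hw h
  simp only [Set.mem_Icc] at hv hw
  rcases hv.2.lt_or_eq with hv' | rfl <;> rcases hw.2.lt_or_eq with hw' | rfl <;>
    simp only [cyclicSucc_of_lt, cyclicSucc_self, *] at h <;> omega

theorem map_cyclicSucc_range'_perm (n : ℕ) :
    ((List.range' 1 n).map (cyclicSucc n)).Perm (List.range' 1 n) := by
  rcases n with _ | m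
  · simp
  have hshift : (List.range' 1 m).map (cyclicSucc (m + 1)) = List.range' 2 m := by
    rw [show 2 = 1 + 1 from rfl, ← List.map_add_range' (a := 1) 1 m 1]
    exact List.map_congr_left fun v hv => by
      rw [cyclicSucc_of_lt (by rw [List.mem_range'_1] at hv; omega), add_comm]
  calc (List.range' 1 (m + 1)).map (cyclicSucc (m + 1))
      _ = List.range' 2 m ++ [1] := by
        rw [List.range'_concat, List.map_append, hshift, one_mul, Nat.add_comm 1 m,
          List.map_singleton, cyclicSucc_self]
      List.Perm _ (1 :: List.range' 2 m) := List.perm_append_singleton 1 _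
      _ = List.range' 1 (m + 1) := by rw [List.range'_succ]

theorem cyclicSucc_descent {n x y : ℕ} (hx : x ∈ Set.Icc 1 n) (hy : y ∈ Set.Icc 1 n) :
    (if cyclicSucc n y < cyclicSucc n x then 1 else 0) + (if x = n then 1 else 0) =
      (if y < x then 1 else 0) + (if y = n then 1 else 0) := by
  simp only [Set.mem_Icc] at hx hy
  rcases hx.2.lt_or_eq with hx' | rfl <;> rcases hy.2.lt_or_eq with hy' | rfl <;>
    simp only [cyclicSucc_of_lt, cyclicSucc_self, *] <;> split_ifs <;> omega

-- For `k = n - 1` the index `i = k` is out of range, but then `k + 1 = n` vanishes in `ZMod n`.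
theorem cast_sum_range_mul_ite_eq {n k : ℕ} (hk : k < n) :
    ((∑ i ∈ range (n - 1), (i + 1) * if i = k then 1 else 0 : ℕ) : ZMod n) = k + 1 := by
  simp only [mul_ite, mul_one, mul_zero, sum_ite_eq', Finset.mem_range]
  split_ifs with h
  · push_cast; rfl
  · obtain rfl : n = k + 1 := by omega
    simp

theorem sum_range_mul_ite_succ_eq {n k : ℕ} (hk : k < n) :
    (∑ i ∈ range (n - 1), (i + 1) * if i + 1 = k then 1 else 0) = k := by
  rcases k with _ | k
  · simp
  · simp only [mul_ite, mul_one, mul_zero, Nat.add_right_cancel_iff, sum_ite_eq',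
      Finset.mem_range]
    rw [if_pos (by omega)]

theorem mem_iff_mem_Icc_of_perm_range' {n v : ℕ} {σ : List ℕ}
    (hσ : σ.Perm (List.range' 1 n)) :
    v ∈ σ ↔ v ∈ Set.Icc 1 n := by
  rw [hσ.mem_iff, List.mem_range'_1, Set.mem_Icc]
  omega

theorem vtSyndrome_map_cyclicSucc {n : ℕ} [NeZero n] {σ : List ℕ}
    (hσ : σ.Perm (List.range' 1 n)) :
    (vtSyndrome (σ.map (cyclicSucc n)) : ZMod n) = vtSyndrome σ - 1 := by
  have hlen : σ.length = n := by simpa using hσ.length_eq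
  have hx : ∀ i < n, σ.getD i 0 ∈ Set.Icc 1 n := fun i hi => by
    rw [List.getD_eq_getElem _ _ (by omega), ← mem_iff_mem_Icc_of_perm_range' hσ]
    exact List.getElem_mem _
  obtain ⟨k, hk, hxk⟩ : ∃ k < n, σ.getD k 0 = n := by
    obtain ⟨k, hk, h⟩ :=
      List.getElem_of_mem ((mem_iff_mem_Icc_of_perm_range' hσ).mpr ⟨NeZero.one_le, le_rfl⟩)
    exact ⟨k, hlen ▸ hk, by rw [List.getD_eq_getElem _ _ hk, h]⟩
  have hx_eq : ∀ i < n, σ.getD i 0 = n ↔ i = k := fun i hi => by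
    rw [← hxk, List.getD_eq_getElem _ _ (by omega), List.getD_eq_getElem _ _ (by omega),
      (hσ.nodup_iff.mpr List.nodup_range').getElem_inj_iff]
  have hmap : ∀ i < n, (σ.map (cyclicSucc n)).getD i 0 = cyclicSucc n (σ.getD i 0) :=
    fun i hi => by
      rw [List.getD_eq_getElem _ _ (by rw [List.length_map]; omega), List.getD_eq_getElem _ _ (by omega),
        List.getElem_map]
  have hcount : vtSyndrome (σ.map (cyclicSucc n)) +
        ∑ i ∈ range (n - 1), (i + 1) * (if i = k then 1 else 0) =
      vtSyndrome σ + ∑ i ∈ range (n - 1), (i + 1) * (if i + 1 = k then 1 else 0) := by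
    simp only [vtSyndrome, List.length_map, hlen, ← sum_add_distrib, ← mul_add]
    refine sum_congr rfl fun i hi => ?_
    rw [Finset.mem_range] at hi
    simp only [hmap i (by omega), hmap (i + 1) (by omega), ← hx_eq i (by omega),
      ← hx_eq (i + 1) (by omega), cyclicSucc_descent (hx i (by omega)) (hx (i + 1) (by omega))]
  have hcast := congrArg (Nat.cast : ℕ → ZMod n) hcount
  rw [Nat.cast_add, Nat.cast_add, cast_sum_range_mul_ite_eq hk, sum_range_mul_ite_succ_eq hk]
    at hcast
  linear_combination hcast

theorem vt_cosets_of_Sn_have_card_factorial_general (n a : ℕ) (ha : a < n) :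
    Set.ncard {σ : List ℕ | σ.Perm (List.range' 1 n) ∧ vtSyndrome σ % n = a} =
      (n - 1).factorial := by
  have : NeZero n := ⟨by omega⟩
  set S := (List.range' 1 n).permutations.toFinset
  have hS (σ : List ℕ) : σ ∈ S ↔ σ.Perm (List.range' 1 n) := by simp [S]
  have hclass : {σ : List ℕ | σ.Perm (List.range' 1 n) ∧ vtSyndrome σ % n = a} =
      ↑{σ ∈ S | (vtSyndrome σ : ZMod n) = a} := by
    ext σ
    simp only [Set.mem_ofPred_eq, coe_filter, hS]
    rw [ZMod.natCast_eq_natCast_iff', Nat.mod_eq_of_lt ha]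
  have hmaps : Set.MapsTo (List.map (cyclicSucc n)) S S := fun σ hσ => by
    rw [mem_coe, hS] at hσ ⊢
    exact (hσ.map _).trans (map_cyclicSucc_range'_perm n)
  have hinj : Set.InjOn (List.map (cyclicSucc n)) S :=
    (List.map_injOn (cyclicSucc_injOn n)).mono fun σ hσ =>
      show ∀ v ∈ σ, v ∈ Set.Icc 1 n from
        fun _ => (mem_iff_mem_Icc_of_perm_range' ((hS σ).mp hσ)).mp
  have hmul := mul_card_fiber_eq_card (φ := fun σ => (vtSyndrome σ : ZMod n)) hmaps hinj
    (fun σ hσ => vtSyndrome_map_cyclicSucc ((hS σ).mp hσ)) (a : ZMod n)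
  rw [hclass, Set.ncard_coe_finset]
  refine Nat.eq_of_mul_eq_mul_left (NeZero.pos n) ?_
  rw [hmul, List.card_toFinset_permutations List.nodup_range', List.length_range',
    Nat.mul_factorial_pred (NeZero.ne n)]

/-- The symmetric group `S_n` is partitioned into `n` classes by the VT-syndrome of
the inversion vector: for each `a ∈ {0,…,n-1}`, the class
`C_a = {σ : VT-syndrome(inv σ) ≡ a (mod n)}` has cardinality `(n-1)!`. -/
theorem vt_cosets_of_Sn_have_card_factorial (n a : ℕ) (hn : 1 ≤ n) (ha : a < n) :
    Set.ncard {σ : List ℕ | σ.Perm (List.range' 1 n) ∧ vtSyndrome σ % n = a} =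
      (n - 1).factorial :=
  vt_cosets_of_Sn_have_card_factorial_general n a ha
end

section
/- The power-sum syndromes determine the transposition positions exactly: if σ' is obtained from σ ∈ S_n by swapping positions a < b (with σ_a ≠ σ_b), then a + b = δ_2/δ_1 and a² + ab + b² = δ_3/δ_1, where δ_k = Σ_i i^k·σ'_i − Σ_i i^k·σ_i; consequently the pair (a,b) is uniquely recoverable from (δ_1, δ_2, δ_3). -/
/-!
Only the positions `a` and `b` contribute to `δ_k`, so `δ_k = (b^k - a^k)(σ_a - σ_b)`. Dividing by
`δ_1` leaves `a + b` and `a² + ab + b²`; together these give `ab = (a + b)² - (a² + ab + b²)`, so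
`{a, b}` is the root set of a known quadratic, and `a < b` fixes the order.
-/

open Finset

theorem Finset.sum_mul_comp_swap_sub_sum_mul {α R : Type*} [DecidableEq α] [CommRing R]
    {s : Finset α} {a b : α} (ha : a ∈ s) (hb : b ∈ s) (hab : a ≠ b) (f g : α → R) :
    ∑ i ∈ s, f i * g (Equiv.swap a b i) - ∑ i ∈ s, f i * g i = (f b - f a) * (g a - g b) := by
  have hpair : ({a, b} : Finset α) ⊆ s := insert_subset ha (singleton_subset_iff.2 hb)
  rw [← sum_sub_distrib, ← sum_subset hpair, sum_pair hab, Equiv.swap_apply_left,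
    Equiv.swap_apply_right]
  · ring
  · intro i _ hi
    simp only [mem_insert, mem_singleton, not_or] at hi
    rw [Equiv.swap_apply_of_ne_of_ne hi.1 hi.2, sub_self]

theorem eq_and_eq_of_add_eq_of_sq_add_mul_add_sq_eq {R : Type*} [CommRing R] [LinearOrder R]
    [IsStrictOrderedRing R] {x y x' y' : R} (hxy : x < y) (hxy' : x' < y')
    (hsum : x' + y' = x + y) (hquad : x' ^ 2 + x' * y' + y' ^ 2 = x ^ 2 + x * y + y ^ 2) :
    x' = x ∧ y' = y := by
  have hprod : x' * y' = x * y := by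
    linear_combination (x' + y' + x + y) * hsum - hquad
  have hroot : (x' - x) * (x' - y) = 0 := by
    linear_combination x' * hsum - hprod
  rcases mul_eq_zero.1 hroot with h | h
  · exact ⟨sub_eq_zero.1 h, by linear_combination hsum - h⟩
  · exfalso
    linarith [sub_eq_zero.1 h]

theorem transposition_positions_recoverable_general (n : ℕ) (σ σ' : ℕ → ℕ)
    (a b : ℕ) (ha : 1 ≤ a) (hab : a < b) (hb : b ≤ n) (hne : σ a ≠ σ b)
    (hσ' : ∀ i, σ' i = if i = a then σ b else if i = b then σ a else σ i)
    (δ₁ δ₂ δ₃ : ℚ)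
    (hδ₁ : δ₁ = (∑ i ∈ Finset.Icc 1 n, (i : ℚ) * σ' i) - ∑ i ∈ Finset.Icc 1 n, (i : ℚ) * σ i)
    (hδ₂ : δ₂ = (∑ i ∈ Finset.Icc 1 n, (i : ℚ) ^ 2 * σ' i)
        - ∑ i ∈ Finset.Icc 1 n, (i : ℚ) ^ 2 * σ i)
    (hδ₃ : δ₃ = (∑ i ∈ Finset.Icc 1 n, (i : ℚ) ^ 3 * σ' i)
        - ∑ i ∈ Finset.Icc 1 n, (i : ℚ) ^ 3 * σ i) :
    δ₁ ≠ 0 ∧ (a : ℚ) + b = δ₂ / δ₁ ∧ (a : ℚ) ^ 2 + a * b + (b : ℚ) ^ 2 = δ₃ / δ₁ ∧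
      ∀ a' b' : ℕ, a' < b' → (a' : ℚ) + b' = δ₂ / δ₁ →
        (a' : ℚ) ^ 2 + a' * b' + (b' : ℚ) ^ 2 = δ₃ / δ₁ → a' = a ∧ b' = b := by
  have hσ'_swap : ∀ i, σ' i = σ (Equiv.swap a b i) := fun i => by
    rw [hσ', Equiv.swap_apply_def]; split_ifs <;> rfl
  have hδ (k : ℕ) : ∑ i ∈ Icc 1 n, (i : ℚ) ^ k * σ' i - ∑ i ∈ Icc 1 n, (i : ℚ) ^ k * σ i
      = ((b : ℚ) ^ k - (a : ℚ) ^ k) * ((σ a : ℚ) - σ b) := by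
    simp only [hσ'_swap]
    exact sum_mul_comp_swap_sub_sum_mul (mem_Icc.2 ⟨ha, by omega⟩) (mem_Icc.2 ⟨by omega, hb⟩)
      hab.ne (fun i : ℕ => (i : ℚ) ^ k) (fun i => (σ i : ℚ))
  replace hδ₁ : δ₁ = ((b : ℚ) - a) * ((σ a : ℚ) - σ b) := by
    simpa only [pow_one, ← hδ₁] using hδ 1
  rw [hδ] at hδ₂ hδ₃
  have hδ₁_ne : δ₁ ≠ 0 := by
    rw [hδ₁]
    exact mul_ne_zero (sub_ne_zero.2 (by exact_mod_cast hab.ne'))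
      (sub_ne_zero.2 (by exact_mod_cast hne))
  have hsum : (a : ℚ) + b = δ₂ / δ₁ := by
    rw [eq_div_iff hδ₁_ne, hδ₁, hδ₂]; ring
  have hquad : (a : ℚ) ^ 2 + a * b + (b : ℚ) ^ 2 = δ₃ / δ₁ := by
    rw [eq_div_iff hδ₁_ne, hδ₁, hδ₃]; ring
  refine ⟨hδ₁_ne, hsum, hquad, fun a' b' hab' hsum' hquad' => ?_⟩
  have h := eq_and_eq_of_add_eq_of_sq_add_mul_add_sq_eq (by exact_mod_cast hab)
    (by exact_mod_cast hab') (hsum'.trans hsum.symm) (hquad'.trans hquad.symm)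
  exact ⟨by exact_mod_cast h.1, by exact_mod_cast h.2⟩

/-- The power-sum syndromes determine the transposition positions exactly: with
`δ_k = ∑ i^k σ'_i − ∑ i^k σ_i` one has `δ_1 ≠ 0`, `a + b = δ_2/δ_1` and
`a² + ab + b² = δ_3/δ_1`; consequently the pair `(a, b)` is uniquely recoverable. -/
theorem transposition_positions_recoverable (n : ℕ) (σ σ' : ℕ → ℕ)
    (hσ : Set.BijOn σ (Set.Icc 1 n) (Set.Icc 1 n))
    (a b : ℕ) (ha : 1 ≤ a) (hab : a < b) (hb : b ≤ n) (hne : σ a ≠ σ b)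
    (hσ' : ∀ i, σ' i = if i = a then σ b else if i = b then σ a else σ i)
    (δ₁ δ₂ δ₃ : ℚ)
    (hδ₁ : δ₁ = (∑ i ∈ Finset.Icc 1 n, (i : ℚ) * σ' i) - ∑ i ∈ Finset.Icc 1 n, (i : ℚ) * σ i)
    (hδ₂ : δ₂ = (∑ i ∈ Finset.Icc 1 n, (i : ℚ) ^ 2 * σ' i)
        - ∑ i ∈ Finset.Icc 1 n, (i : ℚ) ^ 2 * σ i)
    (hδ₃ : δ₃ = (∑ i ∈ Finset.Icc 1 n, (i : ℚ) ^ 3 * σ' i)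
        - ∑ i ∈ Finset.Icc 1 n, (i : ℚ) ^ 3 * σ i) :
    δ₁ ≠ 0 ∧ (a : ℚ) + b = δ₂ / δ₁ ∧ (a : ℚ) ^ 2 + a * b + (b : ℚ) ^ 2 = δ₃ / δ₁ ∧
      ∀ a' b' : ℕ, a' < b' → (a' : ℚ) + b' = δ₂ / δ₁ →
        (a' : ℚ) ^ 2 + a' * b' + (b' : ℚ) ^ 2 = δ₃ / δ₁ → a' = a ∧ b' = b :=
  transposition_positions_recoverable_general n σ σ' a b ha hab hb hne hσ' δ₁ δ₂ δ₃ hδ₁ hδ₂ hδ₃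
end

section
/- Under a uniformly random single translocation of a permutation of length n, the probability P_k that the entry at position k is displaced equals 1 − ((k−2)² + (n−k−1)²)/(n−1)², and this probability is maximized at k = ⌈n/2⌉. -/
/-- The set of words of nonidentity translocations on `[n]` (0-indexed):
the identity word with some entry `i` moved to position `j`, excluding the identity. -/
def transWords (n : ℕ) : Finset (List ℕ) :=
  (((Finset.range n) ×ˢ (Finset.range n)).image
      (fun p : ℕ × ℕ => ((List.range n).eraseIdx p.1).insertIdx p.2 p.1)) \
    {List.range n}

/-!
Moving entry `i` of the identity word to position `j ≠ i` displaces exactly the positions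
between `i` and `j`. Distinct pairs give distinct words except that moving `i` to `i + 1` and
`i + 1` to `i` is the same adjacent swap, so the pairs `(i, j)` with `j ∉ {i, i + 1}` list every
nonidentity translocation once and there are `n² - n - (n - 1) = (n - 1)²` of them.
A translocation fixes position `p` iff its span lies in `[0, p)` or in `(p, n)`; these are the
translocations of segments of lengths `p` and `n - 1 - p`. The maximisation is the integer
minimisation of the convex quadratic `(k - 2)² + (n - k - 1)²`, whose axis is `k = (n + 1) / 2`.
-/

open Finset

def moveWord (n : ℕ) (q : ℕ × ℕ) : List ℕ :=
  ((List.range n).eraseIdx q.1).insertIdx q.2 q.1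

lemma length_moveWord {n i j : ℕ} (hi : i < n) (hj : j < n) :
    (moveWord n (i, j)).length = n := by
  have hlen : ((List.range n).eraseIdx i).length = n - 1 := by simp [List.length_eraseIdx, hi]
  simp only [moveWord]
  rw [List.length_insertIdx_of_le_length (by omega), hlen]
  omega

lemma getD_moveWord {n i j p : ℕ} (hi : i < n) (hj : j < n) (hp : p < n) :
    (moveWord n (i, j)).getD p 0 =
      if p = j then i
      else if p < j then (if p < i then p else p + 1)
      else (if p ≤ i then p - 1 else p) := by
  have hp' : p < (moveWord n (i, j)).length := by rwa [length_moveWord hi hj]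
  rw [List.getD_eq_getElem _ _ hp']
  unfold moveWord at hp' ⊢
  rcases lt_trichotomy p j with hpj | rfl | hpj
  · rw [List.getElem_insertIdx_of_lt hpj, List.getElem_eraseIdx]
    split_ifs <;> simp only [List.getElem_range] <;> omega
  · simp [List.getElem_insertIdx_self]
  · rw [List.getElem_insertIdx_of_gt hpj, List.getElem_eraseIdx]
    split_ifs <;> simp only [List.getElem_range] <;> omega

lemma getD_moveWord_ne_iff {n i j p : ℕ} (hi : i < n) (hj : j < n) (hij : i ≠ j) (hp : p < n) :
    (moveWord n (i, j)).getD p 0 ≠ p ↔ min i j ≤ p ∧ p ≤ max i j := by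
  rw [getD_moveWord hi hj hp]
  split_ifs <;> omega

lemma moveWord_ext {n i j i' j' : ℕ} (hi : i < n) (hj : j < n) (hi' : i' < n) (hj' : j' < n)
    (h : ∀ p < n, (moveWord n (i, j)).getD p 0 = (moveWord n (i', j')).getD p 0) :
    moveWord n (i, j) = moveWord n (i', j') := by
  apply List.ext_getElem (by rw [length_moveWord hi hj, length_moveWord hi' hj'])
  intro p h1 h2
  rw [← List.getD_eq_getElem _ 0 h1, ← List.getD_eq_getElem _ 0 h2]
  exact h p (by rwa [length_moveWord hi hj] at h1)

lemma moveWord_self {n i : ℕ} (hi : i < n) : moveWord n (i, i) = List.range n := by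
  apply List.ext_getElem (by simp [length_moveWord hi hi])
  intro p h1 h2
  have hp : p < n := by simpa using h2
  rw [← List.getD_eq_getElem _ 0 h1, getD_moveWord hi hi hp, List.getElem_range]
  split_ifs <;> omega

lemma moveWord_succ_comm {n i : ℕ} (hi : i + 1 < n) :
    moveWord n (i, i + 1) = moveWord n (i + 1, i) := by
  refine moveWord_ext (by omega) hi hi (by omega) fun p hp => ?_
  rw [getD_moveWord (by omega) hi hp, getD_moveWord hi (by omega) hp]
  split_ifs <;> omega

def translocationPairs (m : ℕ) : Finset (ℕ × ℕ) :=
  (range m ×ˢ range m).filter (fun q => q.2 ≠ q.1 ∧ q.2 ≠ q.1 + 1)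

lemma mem_translocationPairs {m : ℕ} {q : ℕ × ℕ} :
    q ∈ translocationPairs m ↔ q.1 < m ∧ q.2 < m ∧ q.2 ≠ q.1 ∧ q.2 ≠ q.1 + 1 := by
  simp [translocationPairs, and_assoc]

lemma card_translocationPairs (m : ℕ) : #(translocationPairs m) = (m - 1) ^ 2 := by
  have hcompl : (range m ×ˢ range m).filter (fun q => ¬(q.2 ≠ q.1 ∧ q.2 ≠ q.1 + 1)) =
      (range m).diag ∪ (range (m - 1)).image (fun i => (i, i + 1)) := by
    ext ⟨a, b⟩
    simp only [mem_filter, mem_product, mem_range, mem_union, mem_diag, mem_image, Prod.mk.injEq]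
    constructor
    · rintro ⟨⟨ha, hb⟩, h⟩
      by_cases hab : a = b
      · exact Or.inl ⟨ha, hab⟩
      · exact Or.inr ⟨a, by omega, rfl, by omega⟩
    · rintro (⟨ha, rfl⟩ | ⟨i, hi, rfl, rfl⟩) <;> omega
  have hdisj : Disjoint (range m).diag ((range (m - 1)).image (fun i => (i, i + 1))) := by
    simp only [disjoint_left, mem_diag, mem_image]
    rintro _ ⟨-, h⟩ ⟨i, -, rfl⟩
    omega
  have hsum := card_filter_add_card_filter_not (s := range m ×ˢ range m)
    (fun q => q.2 ≠ q.1 ∧ q.2 ≠ q.1 + 1)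
  rw [hcompl, card_union_of_disjoint hdisj, diag_card, card_image_of_injective _
    (fun a b h => by simpa using h), card_product, card_range, card_range] at hsum
  rw [translocationPairs]
  rcases m with _ | m
  · simp
  · simp only [Nat.add_sub_cancel] at hsum ⊢
    nlinarith

lemma transWords_eq_image (n : ℕ) : transWords n = (translocationPairs n).image (moveWord n) := by
  ext w
  simp only [transWords, mem_sdiff, mem_singleton, mem_image, mem_product, mem_range,
    mem_translocationPairs, Prod.exists]
  constructor
  · rintro ⟨⟨i, j, ⟨hi, hj⟩, rfl⟩, hne⟩
    change moveWord n (i, j) ≠ _ at hne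
    have hij : j ≠ i := by rintro rfl; exact hne (moveWord_self hi)
    by_cases hadj : j = i + 1
    · subst hadj
      exact ⟨i + 1, i, ⟨hj, hi, by omega, by omega⟩, (moveWord_succ_comm hj).symm⟩
    · exact ⟨i, j, ⟨hi, hj, hij, hadj⟩, rfl⟩
  · rintro ⟨i, j, ⟨hi, hj, hji, -⟩, rfl⟩
    refine ⟨⟨i, j, ⟨hi, hj⟩, rfl⟩, fun heq => hji ?_⟩
    have := getD_moveWord hi hj hj
    rwa [heq, List.getD_eq_getElem _ _ (by simpa using hj), List.getElem_range, if_pos rfl] at this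

lemma moveWord_injOn (n : ℕ) : Set.InjOn (moveWord n) (translocationPairs n) := by
  rintro ⟨i, j⟩ hq ⟨i', j'⟩ hq' heq
  rw [mem_coe, mem_translocationPairs] at hq hq'
  obtain ⟨hi, hj, hji, hji1⟩ := hq
  obtain ⟨hi', hj', hji', hji1'⟩ := hq'
  have hget : ∀ p, (moveWord n (i, j)).getD p 0 = (moveWord n (i', j')).getD p 0 :=
    fun p => by rw [heq]
  have hspan : ∀ p < n,
      (min i j ≤ p ∧ p ≤ max i j ↔ min i' j' ≤ p ∧ p ≤ max i' j') := by
    intro p hp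
    rw [← getD_moveWord_ne_iff hi hj (Ne.symm hji) hp,
      ← getD_moveWord_ne_iff hi' hj' (Ne.symm hji') hp, hget p]
  have hmin : min i j = min i' j' := by
    have := hspan (min i j) (by omega); have := hspan (min i' j') (by omega); omega
  have hmax : max i j = max i' j' := by
    have := hspan (max i j) (by omega); have := hspan (max i' j') (by omega); omega
  obtain ⟨hi'i, hj'j⟩ | ⟨hi'j, hj'i⟩ : (i' = i ∧ j' = j) ∨ (i' = j ∧ j' = i) := by
    omega
  · rw [hi'i, hj'j]
  · subst i' j'
    -- moving `j` to `i` puts `j ± 1` at position `j`, which is `i` only for an adjacent swap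
    have hat := hget j
    rw [getD_moveWord hi hj hj, getD_moveWord hj hi hj] at hat
    split_ifs at hat <;> omega

lemma card_transWords (n : ℕ) : #(transWords n) = (n - 1) ^ 2 := by
  rw [transWords_eq_image, card_image_of_injOn (moveWord_injOn n), card_translocationPairs]

lemma filter_translocationPairs_max_lt {n p : ℕ} (hp : p ≤ n) :
    (translocationPairs n).filter (fun q => max q.1 q.2 < p) = translocationPairs p := by
  ext ⟨a, b⟩
  simp only [mem_filter, mem_translocationPairs]
  omega

lemma filter_translocationPairs_lt_min (n p : ℕ) :
    (translocationPairs n).filter (fun q => p < min q.1 q.2) =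
      (translocationPairs (n - 1 - p)).image (fun q => (q.1 + (p + 1), q.2 + (p + 1))) := by
  ext ⟨a, b⟩
  simp only [mem_filter, mem_image, mem_translocationPairs, Prod.mk.injEq, Prod.exists]
  constructor
  · rintro ⟨⟨ha, hb, hab, hab'⟩, hp⟩
    exact ⟨a - (p + 1), b - (p + 1), by omega⟩
  · rintro ⟨x, y, ⟨hx, hy, hxy, hxy'⟩, rfl, rfl⟩
    omega

lemma card_filter_getD_ne_add {n p : ℕ} (hp : p < n) :
    #((transWords n).filter (fun w => w.getD p 0 ≠ p)) + ((p - 1) ^ 2 + (n - 2 - p) ^ 2) =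
      (n - 1) ^ 2 := by
  rw [transWords_eq_image, filter_image,
    card_image_of_injOn ((moveWord_injOn n).mono (filter_subset _ _)),
    ← card_translocationPairs, show n - 2 - p = n - 1 - p - 1 by omega,
    ← card_translocationPairs, ← card_translocationPairs]
  have hspan : (translocationPairs n).filter (fun q => (moveWord n q).getD p 0 ≠ p) =
      (translocationPairs n).filter (fun q => min q.1 q.2 ≤ p ∧ p ≤ max q.1 q.2) := by
    refine filter_congr fun q hq => ?_
    rw [mem_translocationPairs] at hq
    exact getD_moveWord_ne_iff hq.1 hq.2.1 (Ne.symm hq.2.2.1) hp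
  have hfix : (translocationPairs n).filter (fun q => ¬(min q.1 q.2 ≤ p ∧ p ≤ max q.1 q.2)) =
      translocationPairs p ∪
        (translocationPairs (n - 1 - p)).image (fun q => (q.1 + (p + 1), q.2 + (p + 1))) := by
    rw [← filter_translocationPairs_max_lt hp.le, ← filter_translocationPairs_lt_min,
      ← filter_or]
    exact filter_congr fun q _ => by omega
  have hdisj : Disjoint (translocationPairs p)
      ((translocationPairs (n - 1 - p)).image (fun q => (q.1 + (p + 1), q.2 + (p + 1)))) := by
    simp only [disjoint_left, mem_image, mem_translocationPairs, Prod.exists]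
    rintro _ ⟨ha, -⟩ ⟨x, y, -, rfl, -⟩
    omega
  rw [hspan, ← card_filter_add_card_filter_not (s := translocationPairs n)
    (fun q => min q.1 q.2 ≤ p ∧ p ≤ max q.1 q.2), hfix, card_union_of_disjoint hdisj,
    card_image_of_injective _ (fun a b h => by simpa [Prod.ext_iff] using h)]

lemma center_sq_add_sq_le (n : ℕ) (k : ℤ) :
    ((((n + 1) / 2 : ℕ) : ℤ) - 2) ^ 2 + ((n : ℤ) - (((n + 1) / 2 : ℕ) : ℤ) - 1) ^ 2 ≤
      (k - 2) ^ 2 + ((n : ℤ) - k - 1) ^ 2 := by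
  set c := (n + 1) / 2
  rw [← sub_nonneg]
  obtain h | h : 2 * c = n + 1 ∨ 2 * c = n := by omega
  · have hn : (n : ℤ) = 2 * c - 1 := by omega
    calc (0 : ℤ) ≤ 2 * (k - c) ^ 2 := by positivity
      _ = _ := by rw [hn]; ring
  · have hn : (n : ℤ) = 2 * c := by omega
    have hcons : 0 ≤ (k - c) * (k - c - 1) := by
      rcases le_or_gt k c with hkc | hkc <;> nlinarith
    calc (0 : ℤ) ≤ 2 * ((k - c) * (k - c - 1)) := by positivity
      _ = _ := by rw [hn]; ring

theorem translocation_displacement_probability_general (n k : ℕ)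
    (hk : 2 ≤ k) (hk' : k ≤ n - 1) :
    (((transWords n).filter (fun w => w.getD (k - 1) 0 ≠ k - 1)).card : ℚ)
        / ((n : ℚ) - 1) ^ 2
      = 1 - (((k : ℚ) - 2) ^ 2 + ((n : ℚ) - (k : ℚ) - 1) ^ 2) / ((n : ℚ) - 1) ^ 2 ∧
    ∀ k' : ℕ, 2 ≤ k' → k' ≤ n - 1 →
      1 - (((k' : ℚ) - 2) ^ 2 + ((n : ℚ) - (k' : ℚ) - 1) ^ 2) / ((n : ℚ) - 1) ^ 2 ≤
        1 - (((((n + 1) / 2 : ℕ) : ℚ) - 2) ^ 2 + ((n : ℚ) - (((n + 1) / 2 : ℕ) : ℚ) - 1) ^ 2)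
          / ((n : ℚ) - 1) ^ 2 := by
  refine ⟨?_, fun k' _ _ => ?_⟩
  · have hcount := card_filter_getD_ne_add (n := n) (p := k - 1) (by omega)
    rw [show k - 1 - 1 = k - 2 by omega, show n - 2 - (k - 1) = n - k - 1 by omega] at hcount
    have hn : ((n : ℚ) - 1) ^ 2 ≠ 0 :=
      pow_ne_zero 2 (sub_ne_zero.2 (by exact_mod_cast (by omega : n ≠ 1)))
    rw [eq_sub_iff_add_eq, ← add_div, div_eq_one_iff_eq hn]
    have := congrArg (Nat.cast : ℕ → ℚ) hcount
    push_cast [Nat.cast_sub (by omega : 2 ≤ k), Nat.cast_sub (by omega : 1 ≤ n),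
      Nat.cast_sub (by omega : k ≤ n), Nat.cast_sub (by omega : 1 ≤ n - k)] at this
    linear_combination this
  · have := center_sq_add_sq_le n k'
    gcongr 1 - ?_ / _
    exact_mod_cast this

/-- Under a uniformly random nonidentity translocation of a permutation of length `n`,
the probability `P_k` that the entry at position `k` (1-indexed, `2 ≤ k ≤ n−1`) is
displaced equals `1 − ((k−2)² + (n−k−1)²)/(n−1)²`, and this probability is maximized
at the center `k = ⌈n/2⌉`. -/
theorem translocation_displacement_probability (n k : ℕ) (hn : 3 ≤ n)
    (hk : 2 ≤ k) (hk' : k ≤ n - 1) :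
    (((transWords n).filter (fun w => w.getD (k - 1) 0 ≠ k - 1)).card : ℚ)
        / ((n : ℚ) - 1) ^ 2
      = 1 - (((k : ℚ) - 2) ^ 2 + ((n : ℚ) - (k : ℚ) - 1) ^ 2) / ((n : ℚ) - 1) ^ 2 ∧
    ∀ k' : ℕ, 2 ≤ k' → k' ≤ n - 1 →
      1 - (((k' : ℚ) - 2) ^ 2 + ((n : ℚ) - (k' : ℚ) - 1) ^ 2) / ((n : ℚ) - 1) ^ 2 ≤
        1 - (((((n + 1) / 2 : ℕ) : ℚ) - 2) ^ 2 + ((n : ℚ) - (((n + 1) / 2 : ℕ) : ℚ) - 1) ^ 2)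
          / ((n : ℚ) - 1) ^ 2 :=
  translocation_displacement_probability_general n k hk hk'
end

section
/- For a block deletion of d consecutive symbols from a sequence of length n, the deinterleaved subsequences each lose exactly one symbol, and the positions of the deleted symbols within the subsequences form a two-valued nonincreasing pattern: if the block of deleted positions is {p*, p*+1, ..., p*+d−1} and the k-th subsequence consists of positions k, k+d, k+2d, ..., then the index of the deleted position within subsequence k takes some value j for k < k₀ and j−1 for k ≥ k₀ (for a unique threshold k₀), or is constant; moreover p* = (j−1)d + 1 if the pattern is constant, and p* = (j−2)d + k₀ otherwise. -/
/-!
The block `{p, …, p + d - 1}` is a complete residue system modulo `d`, so it meets each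
subsequence exactly once. Writing `p - 1 = a d + r` with `r < d`, subsequence `k` loses its
`(a + 2)`-th entry when `k ≤ r` and its `(a + 1)`-th entry otherwise: the pattern is constant
when `r = 0` and drops by one at `k₀ = r + 1` otherwise.
-/

theorem eq_of_add_mul_mem_Ico {k b c d p : ℕ} (hb : k + b * d ∈ Set.Ico p (p + d))
    (hc : k + c * d ∈ Set.Ico p (p + d)) : b = c := by
  obtain ⟨hb₁, hb₂⟩ := hb
  obtain ⟨hc₁, hc₂⟩ := hc
  have hbc : b < c + 1 := Nat.lt_of_mul_lt_mul_right (a := d) (by rw [add_one_mul]; omega)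
  have hcb : c < b + 1 := Nat.lt_of_mul_lt_mul_right (a := d) (by rw [add_one_mul]; omega)
  omega

theorem add_mul_mem_block {d a r k : ℕ} (hr : r < d) (hk : 1 ≤ k) (hkd : k ≤ d) :
    k + (if k ≤ r then a + 1 else a) * d ∈ Set.Ico (a * d + r + 1) (a * d + r + 1 + d) := by
  split_ifs <;> simp only [Set.mem_Ico, add_one_mul] <;> omega

theorem index_eq_of_mem_block {d a r k m : ℕ} (hr : r < d) (hk : 1 ≤ k) (hkd : k ≤ d)
    (hm : 1 ≤ m) (h₁ : a * d + r + 1 ≤ k + (m - 1) * d)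
    (h₂ : k + (m - 1) * d ≤ a * d + r + 1 + d - 1) :
    m = if k ≤ r then a + 2 else a + 1 := by
  have := eq_of_add_mul_mem_Ico ⟨h₁, by omega⟩ (add_mul_mem_block hr hk hkd)
  split_ifs at this ⊢ <;> omega

theorem block_deletion_deinterleaving_general (n d p : ℕ) (q : ℕ → ℕ)
    (hd : 0 < d) (hp : 1 ≤ p)
    (hq : ∀ k, 1 ≤ k → k ≤ d →
      1 ≤ q k ∧ q k ≤ n / d ∧ p ≤ k + (q k - 1) * d ∧ k + (q k - 1) * d ≤ p + d - 1) :
    (∀ k, 1 ≤ k → k ≤ d →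
      ∃! m, 1 ≤ m ∧ m ≤ n / d ∧ p ≤ k + (m - 1) * d ∧ k + (m - 1) * d ≤ p + d - 1) ∧
    (((∀ k, 1 ≤ k → k ≤ d → q k = q 1) ∧ p = (q 1 - 1) * d + 1) ∨
      (∃! k₀, 2 ≤ k₀ ∧ k₀ ≤ d ∧ (∀ k, 1 ≤ k → k < k₀ → q k = q 1) ∧
        (∀ k, k₀ ≤ k → k ≤ d → q k = q 1 - 1) ∧ p = (q 1 - 2) * d + k₀)) := by
  obtain ⟨a, r, hr, rfl⟩ : ∃ a r, r < d ∧ p = a * d + r + 1 :=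
    ⟨(p - 1) / d, (p - 1) % d, Nat.mod_lt _ hd, by have := Nat.div_add_mod' (p - 1) d; omega⟩
  have hqk : ∀ k, 1 ≤ k → k ≤ d → q k = if k ≤ r then a + 2 else a + 1 := fun k hk hkd =>
    let ⟨h₁, _, h₂, h₃⟩ := hq k hk hkd
    index_eq_of_mem_block hr hk hkd h₁ h₂ h₃
  refine ⟨fun k hk hkd => ⟨q k, hq k hk hkd, fun m ⟨hm, _, h₁, h₂⟩ =>
    (index_eq_of_mem_block hr hk hkd hm h₁ h₂).trans (hqk k hk hkd).symm⟩, ?_⟩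
  have hq1 := hqk 1 le_rfl hd
  rcases Nat.eq_zero_or_pos r with rfl | hr0
  · left
    rw [if_neg (by omega)] at hq1
    refine ⟨fun k hk hkd => by rw [hqk k hk hkd, hq1, if_neg (by omega)], ?_⟩
    rw [hq1, Nat.add_sub_cancel]
  · right
    rw [if_pos (by omega)] at hq1
    refine ⟨r + 1, ⟨by omega, by omega, fun k hk hkr => ?_, fun k hkr hkd => ?_, ?_⟩, ?_⟩
    · rw [hqk k hk (by omega), hq1, if_pos (by omega)]
    · rw [hqk k (by omega) hkd, hq1, if_neg (by omega)]
      rfl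
    · rw [hq1, Nat.add_sub_cancel]
      omega
    · rintro k₀ ⟨-, -, -, -, hk₀⟩
      rw [hq1, Nat.add_sub_cancel] at hk₀
      omega

/-- For a block deletion of `d` consecutive positions `{p, …, p+d−1}` from a sequence
of length `n` (with `d ∣ n`), deinterleaved into `d` subsequences (the `k`-th taking
positions `k, k+d, k+2d, …`): each subsequence loses exactly one position, and if
`q k` denotes the (1-based) index within subsequence `k` of its deleted position,
then either `q` is constant, equal to `j = q 1`, and `p = (j−1)d + 1`, or there is a
unique threshold `k₀` with `2 ≤ k₀ ≤ d` such that `q k = j` for `k < k₀` and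
`q k = j − 1` for `k ≥ k₀`, and `p = (j−2)d + k₀`. -/
theorem block_deletion_deinterleaving (n d p : ℕ) (q : ℕ → ℕ)
    (hd : 0 < d) (hdn : d ∣ n) (hp : 1 ≤ p) (hpn : p + d - 1 ≤ n)
    (hq : ∀ k, 1 ≤ k → k ≤ d →
      1 ≤ q k ∧ q k ≤ n / d ∧ p ≤ k + (q k - 1) * d ∧ k + (q k - 1) * d ≤ p + d - 1) :
    (∀ k, 1 ≤ k → k ≤ d →
      ∃! m, 1 ≤ m ∧ m ≤ n / d ∧ p ≤ k + (m - 1) * d ∧ k + (m - 1) * d ≤ p + d - 1) ∧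
    (((∀ k, 1 ≤ k → k ≤ d → q k = q 1) ∧ p = (q 1 - 1) * d + 1) ∨
      (∃! k₀, 2 ≤ k₀ ∧ k₀ ≤ d ∧ (∀ k, 1 ≤ k → k < k₀ → q k = q 1) ∧
        (∀ k, k₀ ≤ k → k ≤ d → q k = q 1 - 1) ∧ p = (q 1 - 2) * d + k₀)) :=
  block_deletion_deinterleaving_general n d p q hd hp hq
end
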